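/- arXiv:2112.07762 — 2 statements merged into one kernel-verified Lean document; each statement's English description precedes it below -/
import Mathlib

section
/- For every positive integer n, the number of partitions of n in which the smallest part occurs at least twice equals the number of partitions of 2n in which the difference between the largest and smallest part equals n. -/
/-!
Mark a partition of `n` with its smallest part `s`, which occurs at least twice, and replace one
copy of `s` by `s + n`. The result is a partition of `2n` whose smallest part is still `s` and whose
largest part is `s + n`, since every other part is at most `n`. Conversely, replacing the largest
part `s + n` of such a partition of `2n` by `s` gives back a partition of `n` in which `s` is the
smallest part and occurs at least twice (once more than before, as `n > 0`). Both smallest and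
largest parts are unique, so counting marked partitions is counting partitions.
-/

open Multiset

theorem Nat.card_subtype_eq_card_subtype_prod {α β : Type*} {Q : α → Prop} {P : α → β → Prop}
    (hQ : ∀ a, Q a ↔ ∃ b, P a b) (huniq : ∀ a b b', P a b → P a b' → b = b') :
    Nat.card {a // Q a} = Nat.card {p : α × β // P p.1 p.2} := by
  refine (Nat.card_congr <| .ofBijective (fun p => ⟨p.1.1, (hQ _).2 ⟨p.1.2, p.2⟩⟩) ⟨?_, ?_⟩).symm
  · rintro ⟨⟨a, b⟩, hb⟩ ⟨⟨a', b'⟩, hb'⟩ h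
    obtain rfl : a = a' := congrArg Subtype.val h
    obtain rfl := huniq a b b' hb hb'
    rfl
  · rintro ⟨a, ha⟩
    obtain ⟨b, hb⟩ := (hQ a).1 ha
    exact ⟨⟨(a, b), hb⟩, rfl⟩

namespace Multiset

variable {α : Type*} [Preorder α] {s b : α} {P : Multiset α}

theorem isLeast_cons_of_isLeast [DecidableEq α] {a : α} (hs : IsLeast {t | t ∈ P} s)
    (hsb : s ≤ b) (hmem : s ∈ b ::ₘ P.erase a) : IsLeast {t | t ∈ b ::ₘ P.erase a} s :=
  ⟨hmem, fun _ ht => (mem_cons.1 ht).elim (· ▸ hsb) fun ht => hs.2 (mem_of_mem_erase ht)⟩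

theorem isGreatest_cons_of_forall_le (h : ∀ t ∈ P, t ≤ b) : IsGreatest {t | t ∈ b ::ₘ P} b :=
  ⟨mem_cons_self b P, fun t ht => (mem_cons.1 ht).elim (·.le) (h t)⟩

end Multiset

namespace Nat.Partition

variable {n m a : ℕ}

def replacePart (π : n.Partition) (ha : a ∈ π.parts) (b : ℕ) (hb : 0 < b)
    (hsum : n + b = m + a) : m.Partition where
  parts := b ::ₘ π.parts.erase a
  parts_pos := by
    intro i hi
    rcases mem_cons.1 hi with rfl | hi
    · exact hb
    · exact π.parts_pos (mem_of_mem_erase hi)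
  parts_sum := by
    have := sum_erase ha
    rw [π.parts_sum] at this
    rw [sum_cons]
    omega

@[simp]
theorem replacePart_parts (π : n.Partition) (ha : a ∈ π.parts) (b : ℕ) (hb : 0 < b)
    (hsum : n + b = m + a) : (π.replacePart ha b hb hsum).parts = b ::ₘ π.parts.erase a :=
  rfl

theorem replacePart_replacePart (π : n.Partition) (ha : a ∈ π.parts) {b : ℕ} (hb : 0 < b)
    (hsum : n + b = m + a) (hb' : b ∈ (π.replacePart ha b hb hsum).parts) :
    (π.replacePart ha b hb hsum).replacePart hb' a (π.parts_pos ha) hsum.symm = π :=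
  Partition.ext <| by simp [cons_erase ha]

def smallestRepeatedEquiv (hn : 0 < n) :
    {p : n.Partition × ℕ // IsLeast {t | t ∈ p.1.parts} p.2 ∧ 2 ≤ p.1.parts.count p.2} ≃
      {p : (2 * n).Partition × ℕ //
        IsLeast {t | t ∈ p.1.parts} p.2 ∧ IsGreatest {t | t ∈ p.1.parts} (p.2 + n)} where
  toFun p :=
    have hs : p.1.2 ∈ p.1.1.parts.erase p.1.2 := by
      rw [← one_le_count_iff_mem, count_erase_self]
      omega
    ⟨(p.1.1.replacePart p.2.1.1 (p.1.2 + n) (by omega) (by omega), p.1.2),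
      isLeast_cons_of_isLeast p.2.1 (by omega) (mem_cons_of_mem hs),
      isGreatest_cons_of_forall_le fun _ ht =>
        (le_of_mem_parts (mem_of_mem_erase ht)).trans (Nat.le_add_left n _)⟩
  invFun p :=
    ⟨(p.1.1.replacePart p.2.2.1 p.1.2 (p.1.1.parts_pos p.2.1.1) (by omega), p.1.2),
      isLeast_cons_of_isLeast p.2.1 le_rfl (mem_cons_self _ _), by
        have := one_le_count_iff_mem.2 p.2.1.1
        rw [replacePart_parts, count_cons_self, count_erase_of_ne (by omega : p.1.2 ≠ p.1.2 + n)]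
        omega⟩
  left_inv p := Subtype.ext <| Prod.ext (by dsimp only; exact replacePart_replacePart ..) rfl
  right_inv p := Subtype.ext <| Prod.ext (by dsimp only; exact replacePart_replacePart ..) rfl

end Nat.Partition

/-- The number of partitions of `n` whose smallest part occurs at least twice equals the
number of partitions of `2n` in which the largest part exceeds the smallest part by `n`. -/
theorem stmt_1 (n : ℕ) (hn : 0 < n) :
    Nat.card {π : n.Partition //
        ∃ s ∈ π.parts, (∀ t ∈ π.parts, s ≤ t) ∧ 2 ≤ π.parts.count s}
      = Nat.card {π : (2 * n).Partition //
        ∃ M ∈ π.parts, ∃ s ∈ π.parts,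
          (∀ t ∈ π.parts, t ≤ M) ∧ (∀ t ∈ π.parts, s ≤ t) ∧ M = s + n} := by
  rw [Nat.card_subtype_eq_card_subtype_prod
      (P := fun (π : n.Partition) s => IsLeast {t | t ∈ π.parts} s ∧ 2 ≤ π.parts.count s)
      (fun π => by simp only [IsLeast, lowerBounds, and_assoc, Set.mem_ofPred_eq])
      fun _ _ _ h h' => h.1.unique h'.1,
    Nat.card_subtype_eq_card_subtype_prod
      (P := fun (π : (2 * n).Partition) s =>
        IsLeast {t | t ∈ π.parts} s ∧ IsGreatest {t | t ∈ π.parts} (s + n))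
      (fun π => ⟨fun ⟨_, hM, s, hs, hmax, hmin, hMs⟩ => ⟨s, ⟨hs, hmin⟩, hMs ▸ ⟨hM, hmax⟩⟩,
        fun ⟨s, ⟨hs, hmin⟩, hM, hmax⟩ => ⟨_, hM, s, hs, hmax, hmin, rfl⟩⟩)
      fun _ _ _ h h' => h.1.unique h'.1]
  exact Nat.card_congr (Nat.Partition.smallestRepeatedEquiv hn)
end

section
/- For every positive integer n, the number of partitions of n in which the smallest part occurs exactly once equals p(n+1) − p(n), where p is the partition function. -/
/-!
Raising the smallest part `s` of a partition of `n` by one gives a partition of `n + 1` with no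
part `1`. When `s` occurs only once, `s + 1` is the smallest part of the result, so lowering the
smallest part by one undoes the move; conversely every partition of `n + 1` without a part `1`
arises this way, and lowering its smallest part `m ≥ 2` produces the unique smallest part `m - 1`.
The partitions of `n + 1` that do contain a `1` are in bijection with the partitions of `n`, so
`p(n + 1) = p(n) + #{partitions of n whose smallest part occurs exactly once}`.
-/

open Multiset

namespace Nat.Partition

variable {n : ℕ}

/-- Junk value `0` when `π` has no parts. -/
noncomputable def smallestPart (π : n.Partition) : ℕ := sInf {i | i ∈ π.parts}

theorem smallestPart_le (π : n.Partition) {i : ℕ} (hi : i ∈ π.parts) : π.smallestPart ≤ i :=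
  Nat.sInf_le hi

theorem smallestPart_eq {π : n.Partition} {s : ℕ} (hs : s ∈ π.parts)
    (hle : ∀ t ∈ π.parts, s ≤ t) : π.smallestPart = s :=
  IsLeast.csInf_eq ⟨hs, hle⟩

theorem smallestPart_mem_of_pos (π : n.Partition) (hn : 0 < n) : π.smallestPart ∈ π.parts := by
  refine Nat.sInf_mem (exists_mem_of_ne_zero fun h => ?_)
  have := π.parts_sum
  rw [h, sum_zero] at this
  omega

theorem one_lt_smallestPart (π : (n + 1).Partition) (h : 1 ∉ π.parts) : 1 < π.smallestPart := by
  have hmem := π.smallestPart_mem_of_pos n.succ_pos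
  have hpos := π.parts_pos hmem
  exact lt_of_le_of_ne hpos fun h1 => h (by rwa [← h1] at hmem)

def HasUniqueSmallestPart (π : n.Partition) : Prop := π.parts.count π.smallestPart = 1

theorem HasUniqueSmallestPart.smallestPart_mem {π : n.Partition} (h : π.HasUniqueSmallestPart) :
    π.smallestPart ∈ π.parts :=
  count_pos.1 (h ▸ one_pos)

theorem HasUniqueSmallestPart.smallestPart_lt {π : n.Partition} (h : π.HasUniqueSmallestPart)
    {t : ℕ} (ht : t ∈ π.parts.erase π.smallestPart) : π.smallestPart < t := by
  refine lt_of_le_of_ne (π.smallestPart_le (mem_of_mem_erase ht)) fun hst => ?_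
  have : (π.parts.erase π.smallestPart).count π.smallestPart = 0 := by
    rw [count_erase_self, h]
  exact count_eq_zero.1 this (hst ▸ ht)

theorem hasUniqueSmallestPart_iff (π : n.Partition) : π.HasUniqueSmallestPart ↔
    ∃ s ∈ π.parts, (∀ t ∈ π.parts, s ≤ t) ∧ π.parts.count s = 1 := by
  refine ⟨fun h => ⟨_, h.smallestPart_mem, fun _ => π.smallestPart_le, h⟩, ?_⟩
  rintro ⟨s, hs, hle, hc⟩
  rwa [HasUniqueSmallestPart, smallestPart_eq hs hle]

noncomputable def succSmallestPart (π : n.Partition) (h : π.smallestPart ∈ π.parts) :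
    (n + 1).Partition where
  parts := (π.smallestPart + 1) ::ₘ π.parts.erase π.smallestPart
  parts_pos hi := by
    rcases mem_cons.1 hi with rfl | hi
    · exact succ_pos _
    · exact π.parts_pos (mem_of_mem_erase hi)
  parts_sum := by
    rw [sum_cons, add_right_comm, sum_erase h, π.parts_sum]

noncomputable def predSmallestPart (π : (n + 1).Partition) (h : 1 ∉ π.parts) : n.Partition where
  parts := (π.smallestPart - 1) ::ₘ π.parts.erase π.smallestPart
  parts_pos hi := by
    rcases mem_cons.1 hi with rfl | hi
    · exact Nat.sub_pos_of_lt (π.one_lt_smallestPart h)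
    · exact π.parts_pos (mem_of_mem_erase hi)
  parts_sum := by
    have hs := sum_erase (π.smallestPart_mem_of_pos n.succ_pos)
    have := π.one_lt_smallestPart h
    rw [π.parts_sum] at hs
    rw [sum_cons]
    omega

theorem smallestPart_succSmallestPart {π : n.Partition} (h : π.HasUniqueSmallestPart) :
    (π.succSmallestPart h.smallestPart_mem).smallestPart = π.smallestPart + 1 := by
  refine smallestPart_eq (mem_cons_self _ _) fun t ht => ?_
  rcases mem_cons.1 ht with rfl | ht
  · exact le_rfl
  · exact h.smallestPart_lt ht

theorem one_notMem_succSmallestPart {π : n.Partition} (h : π.HasUniqueSmallestPart) :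
    1 ∉ (π.succSmallestPart h.smallestPart_mem).parts := fun h1 => by
  have hle := smallestPart_le _ h1
  rw [smallestPart_succSmallestPart h] at hle
  have := π.parts_pos h.smallestPart_mem
  omega

theorem smallestPart_predSmallestPart (π : (n + 1).Partition) (h : 1 ∉ π.parts) :
    (π.predSmallestPart h).smallestPart = π.smallestPart - 1 := by
  refine smallestPart_eq (mem_cons_self _ _) fun t ht => ?_
  rcases mem_cons.1 ht with rfl | ht
  · exact le_rfl
  · exact (Nat.sub_le _ _).trans (π.smallestPart_le (mem_of_mem_erase ht))

theorem hasUniqueSmallestPart_predSmallestPart (π : (n + 1).Partition) (h : 1 ∉ π.parts) :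
    (π.predSmallestPart h).HasUniqueSmallestPart := by
  have hlt := π.one_lt_smallestPart h
  have hnotMem : π.smallestPart - 1 ∉ π.parts.erase π.smallestPart := fun hm => by
    have := π.smallestPart_le (mem_of_mem_erase hm)
    omega
  rw [HasUniqueSmallestPart, smallestPart_predSmallestPart]
  exact (count_cons_self _ _).trans (by rw [count_eq_zero.2 hnotMem])

noncomputable def uniqueSmallestPartEquiv (n : ℕ) :
    {π : n.Partition // π.HasUniqueSmallestPart} ≃ {σ : (n + 1).Partition // 1 ∉ σ.parts} where
  toFun π := ⟨π.1.succSmallestPart π.2.smallestPart_mem, one_notMem_succSmallestPart π.2⟩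
  invFun σ := ⟨σ.1.predSmallestPart σ.2, hasUniqueSmallestPart_predSmallestPart σ.1 σ.2⟩
  left_inv := by
    rintro ⟨π, h⟩
    refine Subtype.ext <| Partition.ext ?_
    change (_ - 1) ::ₘ erase (_ ::ₘ _) _ = _
    rw [smallestPart_succSmallestPart h, Nat.add_sub_cancel, erase_cons_head,
      cons_erase h.smallestPart_mem]
  right_inv := by
    rintro ⟨σ, h⟩
    refine Subtype.ext <| Partition.ext ?_
    change (_ + 1) ::ₘ erase (_ ::ₘ _) _ = _
    rw [smallestPart_predSmallestPart, erase_cons_head,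
      Nat.sub_add_cancel (σ.one_lt_smallestPart h).le,
      cons_erase (σ.smallestPart_mem_of_pos n.succ_pos)]

theorem card_succ (n : ℕ) : Nat.card (n + 1).Partition =
    Nat.card n.Partition + Nat.card {π : n.Partition // π.HasUniqueSmallestPart} := by
  rw [← Nat.card_congr (Equiv.sumCompl fun σ : (n + 1).Partition => 1 ∈ σ.parts), Nat.card_sum,
    Nat.card_congr (partitionWithPartEquiv le_rfl (Nat.le_add_left 1 n)), Nat.add_sub_cancel,
    Nat.card_congr (uniqueSmallestPartEquiv n)]

end Nat.Partition

open Nat.Partition in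
theorem stmt_2_general (n : ℕ) :
    (Nat.card {π : n.Partition //
        ∃ s ∈ π.parts, (∀ t ∈ π.parts, s ≤ t) ∧ π.parts.count s = 1} : ℤ)
      = (Nat.card (Nat.Partition (n + 1)) : ℤ) - (Nat.card (Nat.Partition n) : ℤ) := by
  rw [card_succ, ← Nat.card_congr (Equiv.subtypeEquivRight hasUniqueSmallestPart_iff)]
  push_cast
  ring

/-- The number of partitions of `n` whose smallest part occurs exactly once equals
`p(n+1) − p(n)`. -/
theorem stmt_2 (n : ℕ) (hn : 0 < n) :
    (Nat.card {π : n.Partition //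
        ∃ s ∈ π.parts, (∀ t ∈ π.parts, s ≤ t) ∧ π.parts.count s = 1} : ℤ)
      = (Nat.card (Nat.Partition (n + 1)) : ℤ) - (Nat.card (Nat.Partition n) : ℤ) :=
  stmt_2_general n
end
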